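/- arXiv:math/0611702 — 6 statements merged into one kernel-verified Lean document; each statement's English description precedes it below -/
import Mathlib

section
/- Let 2 < p < q and let (a,b,c) ∈ ℝ × ℝ × (0,∞) satisfy a + b = c and a·p = c·q. Define f : [0,∞) → ℝ by f(x) = a·x^p + b for x > 1 and f(x) = c·x^q for 0 ≤ x ≤ 1. Then there exists δ > 0 and K > 0 such that for all x ∈ (1, 1+δ) and y ∈ (1−δ, 1), one has f(x) − f(y) − f'(y)·(x−y) ≥ K·|x−y|^q. -/
open Real Topology

/-!
Write `B_r(t) = t ^ r - 1 - r (t - 1)`. Since `a + b = c` and `a p = c q`, the Bregman gap of `f`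
splits at the gluing point `1` as
`a B_p(x) + c y ^ q B_q(1 / y) + c q (1 - y ^ (q - 1)) (x - 1)`.
For `r ≥ 2` the Bernoulli inequality applied to `t ^ 2` with exponent `r / 2` gives
`B_r(t) ≥ r / 2 (t - 1) ^ 2`, the last term is nonnegative, and once `x - y < 1`,
`(x - y) ^ q ≤ (x - y) ^ 2 ≤ 2 ((x - 1) ^ 2 + (1 - y) ^ 2)`.
-/

theorem sq_le_rpow_sub_one_sub_mul {r t : ℝ} (hr : 2 ≤ r) (ht : 0 ≤ t) :
    r / 2 * (t - 1) ^ 2 ≤ t ^ r - 1 - r * (t - 1) := by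
  have h := one_add_mul_self_le_rpow_one_add (s := t ^ 2 - 1) (by nlinarith)
    (show 1 ≤ r / 2 by linarith)
  have hpow : (t ^ 2) ^ (r / 2) = t ^ r := by
    rw [← rpow_natCast, ← rpow_mul ht]; ring_nf
  rw [add_sub_cancel, hpow] at h
  have e : r / 2 * (t - 1) ^ 2 + r * (t - 1) = r / 2 * (t ^ 2 - 1) := by ring
  linarith

theorem mul_rpow_sub_two_mul_sq_le {r y : ℝ} (hr : 2 ≤ r) (hy : 0 < y) :
    r / 2 * y ^ (r - 2) * (1 - y) ^ 2 ≤ 1 - y ^ r - r * y ^ (r - 1) * (1 - y) := by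
  have h := sq_le_rpow_sub_one_sub_mul hr (inv_nonneg.2 hy.le)
  have hw : 0 < y ^ (r - 2) := rpow_pos_of_pos hy _
  have hr1 : y ^ (r - 1) = y ^ (r - 2) * y := by
    rw [← rpow_add_one hy.ne']; ring_nf
  have hr0 : y ^ r = y ^ (r - 2) * y ^ 2 := by
    rw [← rpow_natCast, ← rpow_add hy]; norm_num
  rw [inv_rpow hy.le, hr0] at h
  rw [hr0, hr1]
  have := mul_le_mul_of_nonneg_left h (mul_pos hw (pow_pos hy 2)).le
  field_simp at this
  linarith

theorem deriv_eq_of_eqOn_const_mul_rpow {f : ℝ → ℝ} {c q y : ℝ}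
    (hf : ∀ x : ℝ, 0 ≤ x → x ≤ 1 → f x = c * x ^ q) (hy₀ : 0 < y) (hy₁ : y < 1) :
    deriv f y = c * q * y ^ (q - 1) := by
  have hev : f =ᶠ[𝓝 y] fun t => c * t ^ q := by
    filter_upwards [Ioo_mem_nhds hy₀ hy₁] with t ht
    exact hf t ht.1.le ht.2.le
  rw [hev.deriv_eq, ((hasDerivAt_rpow_const (Or.inl hy₀.ne')).const_mul c).deriv, mul_assoc]

theorem glued_bregman_ge {p q a b c x y : ℝ} (hp : 2 ≤ p) (hq : 2 ≤ q) (hc : 0 < c)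
    (habc : a + b = c) (hapcq : a * p = c * q)
    (hx₁ : 1 < x) (hx₂ : x < 3 / 2) (hy₁ : 1 / 2 < y) (hy₂ : y < 1) :
    c * q * (1 / 2) ^ (q - 2) / 4 * (x - y) ^ q ≤
      a * x ^ p + b - c * y ^ q - c * q * y ^ (q - 1) * (x - y) := by
  have hsplit : a * x ^ p + b - c * y ^ q - c * q * y ^ (q - 1) * (x - y) =
      a * (x ^ p - 1 - p * (x - 1)) + c * (1 - y ^ q - q * y ^ (q - 1) * (1 - y)) +
        c * q * (1 - y ^ (q - 1)) * (x - 1) := by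
    linear_combination habc + (x - 1) * hapcq
  set m : ℝ := (1 / 2) ^ (q - 2)
  have hcq : 0 < c * q := by positivity
  have ha : 0 < a := by nlinarith
  have hm₁ : m ≤ 1 := rpow_le_one (by norm_num) (by norm_num) (by linarith)
  have hmy : m ≤ y ^ (q - 2) := rpow_le_rpow (by norm_num) hy₁.le (by linarith)
  have hyq : y ^ (q - 1) ≤ 1 := rpow_le_one (by linarith) hy₂.le (by linarith)
  have hright : c * q * m / 2 * (x - 1) ^ 2 ≤ a * (x ^ p - 1 - p * (x - 1)) := by
    have := sq_le_rpow_sub_one_sub_mul hp (show 0 ≤ x by linarith)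
    calc c * q * m / 2 * (x - 1) ^ 2 ≤ c * q / 2 * (x - 1) ^ 2 := by
          gcongr ?_ / 2 * _; exact mul_le_of_le_one_right hcq.le hm₁
      _ = a * p / 2 * (x - 1) ^ 2 := by rw [hapcq]
      _ ≤ a * (x ^ p - 1 - p * (x - 1)) := by nlinarith
  have hleft : c * q * m / 2 * (1 - y) ^ 2 ≤ c * (1 - y ^ q - q * y ^ (q - 1) * (1 - y)) := by
    have := mul_rpow_sub_two_mul_sq_le hq (show 0 < y by linarith)
    calc c * q * m / 2 * (1 - y) ^ 2 ≤ c * (q / 2 * y ^ (q - 2) * (1 - y) ^ 2) := by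
          have : q / 2 * m * (1 - y) ^ 2 ≤ q / 2 * y ^ (q - 2) * (1 - y) ^ 2 := by gcongr
          nlinarith
      _ ≤ c * (1 - y ^ q - q * y ^ (q - 1) * (1 - y)) := by gcongr
  have hcross : 0 ≤ c * q * (1 - y ^ (q - 1)) * (x - 1) := by
    have : 0 ≤ 1 - y ^ (q - 1) := by linarith
    have : 0 ≤ x - 1 := by linarith
    positivity
  have hpow : (x - y) ^ q ≤ (x - y) ^ 2 := by
    rw [← rpow_two]
    exact rpow_le_rpow_of_exponent_ge (by linarith) (by linarith) hq
  calc c * q * m / 4 * (x - y) ^ q ≤ c * q * m / 4 * (x - y) ^ 2 := by gcongr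
    _ ≤ c * q * m / 4 * (2 * ((x - 1) ^ 2 + (1 - y) ^ 2)) := by
        gcongr; nlinarith [sq_nonneg (x - 1 - (1 - y))]
    _ = c * q * m / 2 * (x - 1) ^ 2 + c * q * m / 2 * (1 - y) ^ 2 := by ring
    _ ≤ a * x ^ p + b - c * y ^ q - c * q * y ^ (q - 1) * (x - y) := by
        rw [hsplit]; linarith

theorem stmt0 (p q a b c : ℝ) (hp : 2 < p) (hpq : p < q)
    (hc : 0 < c) (habc : a + b = c) (hapcq : a * p = c * q)
    (f : ℝ → ℝ)
    (hf₁ : ∀ x : ℝ, 1 < x → f x = a * x ^ p + b)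
    (hf₂ : ∀ x : ℝ, 0 ≤ x → x ≤ 1 → f x = c * x ^ q) :
    ∃ δ > (0:ℝ), ∃ K > (0:ℝ), ∀ x y : ℝ, 1 < x → x < 1 + δ → 1 - δ < y → y < 1 →
      f x - f y - deriv f y * (x - y) ≥ K * |x - y| ^ q := by
  have hq : 2 ≤ q := by linarith
  refine ⟨1 / 2, by norm_num, c * q * (1 / 2) ^ (q - 2) / 4, by positivity, ?_⟩
  intro x y hx₁ hx₂ hy₁ hy₂
  have hy₀ : 0 < y := by linarith
  rw [hf₁ x hx₁, hf₂ y hy₀.le hy₂.le, deriv_eq_of_eqOn_const_mul_rpow hf₂ hy₀ hy₂,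
    abs_of_pos (by linarith : 0 < x - y)]
  have := glued_bregman_ge hp.le hq hc habc hapcq hx₁ (by linarith) (by linarith) hy₂
  linarith
end

section
/- Let 2 < p < q and let (a,b,c) ∈ ℝ × ℝ × (0,∞) satisfy a + b = c and a·p = c·q. Define f : [0,∞) → ℝ by f(x) = a·x^p + b for x > 1 and f(x) = c·x^q for 0 ≤ x ≤ 1. Then there exists K > 0 such that for all nonnegative reals x, y: f(x) − f(y) − f'(y)·(x−y) ≥ K · min(|x−y|^p, |x−y|^q). -/
/-! The derivative `g` of `f` is glued from `c q t^(q-1)` on `[0, 1]` and `a p t^(p-1)` on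
`[1, ∞)`; the two pieces agree at `1` because `a p = c q`. Superadditivity of `t ↦ t ^ s` for
`s ≥ 1` shows that `g` increases by at least `c q min ((h/2)^(p-1)) ((h/2)^(q-1))` over any
interval of length `h` (split at `1` if the interval straddles it). The mean value theorem
on the two halves of the segment between `x` and `y` then bounds `f x - f y - g y (x - y)`
below by `d/2` times this increment at `d/2`, where `d = |x - y|`, and that is at
least `2 c q / 4^q · min (d^p) (d^q)`. -/

open Set

section Bregman

variable {f g : ℝ → ℝ}

theorem mul_sub_le_sub_and_sub_le_mul_sub_of_monotoneOn
    (hf : ∀ t, 0 ≤ t → HasDerivWithinAt f (g t) (Ici 0) t) (hg : MonotoneOn g (Ici 0))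
    {u v : ℝ} (hu : 0 ≤ u) (huv : u ≤ v) :
    g u * (v - u) ≤ f v - f u ∧ f v - f u ≤ g v * (v - u) := by
  have hcont : ContinuousOn f (Icc u v) := fun t ht =>
    (hf t (hu.trans ht.1)).continuousWithinAt.mono fun s hs => hu.trans hs.1
  have hderiv : ∀ t ∈ interior (Icc u v), HasDerivAt f (g t) t := by
    rw [interior_Icc]
    exact fun t ht => (hf t (hu.trans ht.1.le)).hasDerivAt (Ici_mem_nhds (hu.trans_lt ht.1))
  have hdiff : DifferentiableOn ℝ f (interior (Icc u v)) := fun t ht =>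
    (hderiv t ht).differentiableAt.differentiableWithinAt
  have hmem : ∀ t ∈ interior (Icc u v), 0 ≤ t ∧ u ≤ t ∧ t ≤ v := by
    rw [interior_Icc]
    exact fun t ht => ⟨hu.trans ht.1.le, ht.1.le, ht.2.le⟩
  constructor
  · refine (convex_Icc u v).mul_sub_le_image_sub_of_le_deriv hcont hdiff (fun t ht => ?_)
      u (left_mem_Icc.2 huv) v (right_mem_Icc.2 huv) huv
    rw [(hderiv t ht).deriv]
    exact hg hu (hmem t ht).1 (hmem t ht).2.1
  · refine (convex_Icc u v).image_sub_le_mul_sub_of_deriv_le hcont hdiff (fun t ht => ?_)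
      u (left_mem_Icc.2 huv) v (right_mem_Icc.2 huv) huv
    rw [(hderiv t ht).deriv]
    exact hg (hmem t ht).1 (hu.trans huv) (hmem t ht).2.2

theorem le_bregman_of_increment_le {ψ : ℝ → ℝ}
    (hf : ∀ t, 0 ≤ t → HasDerivWithinAt f (g t) (Ici 0) t)
    (hψ_nonneg : ∀ h, 0 ≤ h → 0 ≤ ψ h)
    (hψ : ∀ y z, 0 ≤ y → y ≤ z → ψ (z - y) ≤ g z - g y) {x y : ℝ} (hx : 0 ≤ x)
    (hy : 0 ≤ y) :
    |x - y| / 2 * ψ (|x - y| / 2) ≤ f x - f y - g y * (x - y) := by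
  have hg : MonotoneOn g (Ici 0) := fun s hs t _ hst => by
    linarith [hψ s t hs hst, hψ_nonneg (t - s) (sub_nonneg.2 hst)]
  have slope := fun {u v : ℝ} (hu : 0 ≤ u) (huv : u ≤ v) =>
    mul_sub_le_sub_and_sub_le_mul_sub_of_monotoneOn hf hg hu huv
  obtain ⟨m, hm⟩ : ∃ m, x + y = 2 * m := ⟨(x + y) / 2, by ring⟩
  rcases le_total y x with hyx | hxy
  · have hym : y ≤ m := by linarith
    have hd : |x - y| / 2 = m - y := by rw [abs_of_nonneg (sub_nonneg.2 hyx)]; linarith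
    have hxm : x - m = m - y := by linarith
    have hleft := (slope hy hym).1
    have hright := (slope (hy.trans hym) (by linarith : m ≤ x)).1
    have hinc := mul_le_mul_of_nonneg_left (hψ y m hy hym) (sub_nonneg.2 hym)
    rw [hxm] at hright
    rw [hd, show x - y = 2 * (m - y) by linarith]
    linarith
  · have hmy : m ≤ y := by linarith
    have hd : |x - y| / 2 = y - m := by rw [abs_of_nonpos (sub_nonpos.2 hxy)]; linarith
    have hmx : m - x = y - m := by linarith
    have hleft := (slope hx (by linarith : x ≤ m)).2
    have hright := (slope (hx.trans (by linarith)) hmy).2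
    have hinc := mul_le_mul_of_nonneg_left (hψ m y (by linarith) hmy) (sub_nonneg.2 hmy)
    rw [hmx] at hleft
    rw [hd, show x - y = -(2 * (y - m)) by linarith]
    linarith

end Bregman

theorem sub_rpow_le_rpow_sub_rpow {s y z : ℝ} (hs : 1 ≤ s) (hy : 0 ≤ y) (hyz : y ≤ z) :
    (z - y) ^ s ≤ z ^ s - y ^ s := by
  have := Real.add_rpow_le_rpow_add hy (sub_nonneg.2 hyz) hs
  rw [add_sub_cancel] at this
  linarith

theorem min_rpow_div_rpow_le {p q d l : ℝ} (hpq : p ≤ q) (hd : 0 ≤ d) (hl : 1 ≤ l) :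
    min (d ^ p) (d ^ q) / l ^ q ≤ min ((d / l) ^ p) ((d / l) ^ q) := by
  have hlq : 0 < l ^ q := Real.rpow_pos_of_pos (by linarith) q
  have key : ∀ r ≤ q, d ^ r / l ^ q ≤ (d / l) ^ r := fun r hr => by
    rw [Real.div_rpow hd (by linarith)]
    gcongr
  exact le_min ((div_le_div_of_nonneg_right (min_le_left _ _) hlq.le).trans (key p hpq))
    ((div_le_div_of_nonneg_right (min_le_right _ _) hlq.le).trans (key q le_rfl))

theorem mul_min_rpow_sub_one {p q x : ℝ} (hp : p ≠ 0) (hq : q ≠ 0) (hx : 0 ≤ x) :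
    x * min (x ^ (p - 1)) (x ^ (q - 1)) = min (x ^ p) (x ^ q) := by
  have h : ∀ r : ℝ, r ≠ 0 → x * x ^ (r - 1) = x ^ r := fun r hr => by
    rw [mul_comm, ← Real.rpow_add_one' hx (by simpa using hr), sub_add_cancel]
  rw [mul_min_of_nonneg _ _ hx, h p hp, h q hq]

noncomputable def splicedDeriv (p q a c t : ℝ) : ℝ :=
  if t ≤ 1 then c * q * t ^ (q - 1) else a * p * t ^ (p - 1)

section SplicedDeriv

variable {p q a b c t : ℝ} {f : ℝ → ℝ}

theorem splicedDeriv_of_le_one (ht : t ≤ 1) : splicedDeriv p q a c t = c * q * t ^ (q - 1) :=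
  if_pos ht

theorem splicedDeriv_of_one_le (hapcq : a * p = c * q) (ht : 1 ≤ t) :
    splicedDeriv p q a c t = a * p * t ^ (p - 1) := by
  rcases ht.eq_or_lt with rfl | ht
  · simp [splicedDeriv, hapcq]
  · exact if_neg (not_le.2 ht)

theorem splicedDeriv_sub_of_le_one (hcq : 0 ≤ c * q) (hq : 1 ≤ q - 1) {y z : ℝ} (hy : 0 ≤ y)
    (hyz : y ≤ z) (hz : z ≤ 1) :
    c * q * (z - y) ^ (q - 1) ≤ splicedDeriv p q a c z - splicedDeriv p q a c y := by
  rw [splicedDeriv_of_le_one hz, splicedDeriv_of_le_one (hyz.trans hz), ← mul_sub]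
  gcongr
  exact sub_rpow_le_rpow_sub_rpow hq hy hyz

theorem splicedDeriv_sub_of_one_le (hapcq : a * p = c * q) (hcq : 0 ≤ c * q) (hp : 1 ≤ p - 1)
    {y z : ℝ} (hy : 1 ≤ y) (hyz : y ≤ z) :
    c * q * (z - y) ^ (p - 1) ≤ splicedDeriv p q a c z - splicedDeriv p q a c y := by
  rw [splicedDeriv_of_one_le hapcq (hy.trans hyz), splicedDeriv_of_one_le hapcq hy, ← mul_sub,
    hapcq]
  gcongr
  exact sub_rpow_le_rpow_sub_rpow hp (by linarith) hyz

theorem splicedDeriv_sub_ge (hapcq : a * p = c * q) (hcq : 0 ≤ c * q) (hp : 1 ≤ p - 1)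
    (hq : 1 ≤ q - 1) {y z : ℝ} (hy : 0 ≤ y) (hyz : y ≤ z) :
    c * q * min (((z - y) / 2) ^ (p - 1)) (((z - y) / 2) ^ (q - 1)) ≤
      splicedDeriv p q a c z - splicedDeriv p q a c y := by
  have hh : 0 ≤ (z - y) / 2 := by linarith
  rcases le_total z 1 with hz | hz
  · calc _ ≤ c * q * (z - y) ^ (q - 1) := by
          gcongr
          exact (min_le_right _ _).trans (by gcongr; linarith)
      _ ≤ _ := splicedDeriv_sub_of_le_one hcq hq hy hyz hz
  rcases le_total 1 y with hy1 | hy1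
  · calc _ ≤ c * q * (z - y) ^ (p - 1) := by
          gcongr
          exact (min_le_left _ _).trans (by gcongr; linarith)
      _ ≤ _ := splicedDeriv_sub_of_one_le hapcq hcq hp hy1 hyz
  -- `[y, z]` straddles `1`; the longer of `[y, 1]` and `[1, z]` has length at least `(z - y) / 2`
  have hleft := splicedDeriv_sub_of_le_one (a := a) (p := p) hcq hq hy hy1 le_rfl
  have hright := splicedDeriv_sub_of_one_le hapcq hcq hp le_rfl hz
  have hmin : min (((z - y) / 2) ^ (p - 1)) (((z - y) / 2) ^ (q - 1)) ≤
      (1 - y) ^ (q - 1) + (z - 1) ^ (p - 1) := by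
    have h₁ : 0 ≤ (1 - y) ^ (q - 1) := Real.rpow_nonneg (by linarith) _
    have h₂ : 0 ≤ (z - 1) ^ (p - 1) := Real.rpow_nonneg (by linarith) _
    rcases le_total ((z - y) / 2) (1 - y) with h | h
    · linarith [min_le_right (((z - y) / 2) ^ (p - 1)) (((z - y) / 2) ^ (q - 1)),
        Real.rpow_le_rpow hh h (by linarith : (0 : ℝ) ≤ q - 1)]
    · linarith [min_le_left (((z - y) / 2) ^ (p - 1)) (((z - y) / 2) ^ (q - 1)),
        Real.rpow_le_rpow hh (by linarith : (z - y) / 2 ≤ z - 1)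
          (by linarith : (0 : ℝ) ≤ p - 1)]
  nlinarith [mul_le_mul_of_nonneg_left hmin hcq]

theorem hasDerivWithinAt_splicedDeriv_Icc (hq : 1 ≤ q)
    (hf₂ : ∀ x : ℝ, 0 ≤ x → x ≤ 1 → f x = c * x ^ q) (ht : t ∈ Icc 0 1) :
    HasDerivWithinAt f (splicedDeriv p q a c t) (Icc 0 1) t := by
  rw [splicedDeriv_of_le_one ht.2, mul_assoc]
  exact ((Real.hasDerivAt_rpow_const (Or.inr hq)).const_mul c).hasDerivWithinAt.congr
    (fun x hx => hf₂ x hx.1 hx.2) (hf₂ t ht.1 ht.2)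

theorem hasDerivWithinAt_splicedDeriv_Ici_one (habc : a + b = c) (hapcq : a * p = c * q)
    (hf₁ : ∀ x : ℝ, 1 < x → f x = a * x ^ p + b)
    (hf₂ : ∀ x : ℝ, 0 ≤ x → x ≤ 1 → f x = c * x ^ q) (ht : 1 ≤ t) :
    HasDerivWithinAt f (splicedDeriv p q a c t) (Ici 1) t := by
  have hf : ∀ x : ℝ, 1 ≤ x → f x = a * x ^ p + b := fun x hx => by
    rcases hx.eq_or_lt with rfl | hx
    · simp [hf₂ 1 zero_le_one le_rfl, ← habc]
    · exact hf₁ x hx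
  rw [splicedDeriv_of_one_le hapcq ht, mul_assoc]
  exact (((Real.hasDerivAt_rpow_const (Or.inl (by positivity))).const_mul a).add_const b
    ).hasDerivWithinAt.congr hf (hf t ht)

theorem hasDerivAt_splicedDeriv (hq : 1 ≤ q) (habc : a + b = c) (hapcq : a * p = c * q)
    (hf₁ : ∀ x : ℝ, 1 < x → f x = a * x ^ p + b)
    (hf₂ : ∀ x : ℝ, 0 ≤ x → x ≤ 1 → f x = c * x ^ q) (ht : 0 < t) :
    HasDerivAt f (splicedDeriv p q a c t) t := by
  rcases lt_or_ge t 1 with ht1 | ht1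
  · exact (hasDerivWithinAt_splicedDeriv_Icc hq hf₂ ⟨ht.le, ht1.le⟩).hasDerivAt
      (Icc_mem_nhds ht ht1)
  rcases ht1.eq_or_lt with rfl | ht1
  · have h := (hasDerivWithinAt_splicedDeriv_Icc hq hf₂ ⟨zero_le_one, le_rfl⟩).union
      (hasDerivWithinAt_splicedDeriv_Ici_one habc hapcq hf₁ hf₂ le_rfl)
    rw [Icc_union_Ici_eq_Ici zero_le_one] at h
    exact h.hasDerivAt (Ici_mem_nhds ht)
  · exact (hasDerivWithinAt_splicedDeriv_Ici_one habc hapcq hf₁ hf₂ ht1.le).hasDerivAt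
      (Ici_mem_nhds ht1)

theorem hasDerivWithinAt_splicedDeriv_Ici_zero (hq : 1 ≤ q) (habc : a + b = c)
    (hapcq : a * p = c * q) (hf₁ : ∀ x : ℝ, 1 < x → f x = a * x ^ p + b)
    (hf₂ : ∀ x : ℝ, 0 ≤ x → x ≤ 1 → f x = c * x ^ q) (ht : 0 ≤ t) :
    HasDerivWithinAt f (splicedDeriv p q a c t) (Ici 0) t := by
  rcases ht.eq_or_lt with rfl | ht
  · exact (hasDerivWithinAt_splicedDeriv_Icc hq hf₂ ⟨le_rfl, zero_le_one⟩
      ).mono_of_mem_nhdsWithin (Icc_mem_nhdsGE zero_lt_one)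
  · exact (hasDerivAt_splicedDeriv hq habc hapcq hf₁ hf₂ ht).hasDerivWithinAt

/-- At `0` the values of `f` on the negative axis are unconstrained, so `deriv f 0` is either
the one-sided derivative or the junk value `0`; both vanish since `q > 1`. -/
theorem deriv_eq_splicedDeriv (hq : 1 < q) (habc : a + b = c) (hapcq : a * p = c * q)
    (hf₁ : ∀ x : ℝ, 1 < x → f x = a * x ^ p + b)
    (hf₂ : ∀ x : ℝ, 0 ≤ x → x ≤ 1 → f x = c * x ^ q) (ht : 0 ≤ t) :
    deriv f t = splicedDeriv p q a c t := by
  rcases ht.eq_or_lt with rfl | ht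
  · have h0 : splicedDeriv p q a c 0 = 0 := by
      rw [splicedDeriv_of_le_one zero_le_one, Real.zero_rpow (by linarith), mul_zero]
    have h := hasDerivWithinAt_splicedDeriv_Ici_zero hq.le habc hapcq hf₁ hf₂ le_rfl
    rw [h0] at h ⊢
    exact h.deriv_eq_zero (uniqueDiffWithinAt_Ici 0)
  · exact (hasDerivAt_splicedDeriv hq.le habc hapcq hf₁ hf₂ ht).deriv

end SplicedDeriv

theorem stmt1 (p q a b c : ℝ) (hp : 2 < p) (hpq : p < q)
    (hc : 0 < c) (habc : a + b = c) (hapcq : a * p = c * q)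
    (f : ℝ → ℝ)
    (hf₁ : ∀ x : ℝ, 1 < x → f x = a * x ^ p + b)
    (hf₂ : ∀ x : ℝ, 0 ≤ x → x ≤ 1 → f x = c * x ^ q) :
    ∃ K > (0:ℝ), ∀ x y : ℝ, 0 ≤ x → 0 ≤ y →
      f x - f y - deriv f y * (x - y) ≥ K * min (|x - y| ^ p) (|x - y| ^ q) := by
  have hcq : 0 < c * q := mul_pos hc (by linarith)
  refine ⟨2 * (c * q) / 4 ^ q, by positivity, fun x y hx hy => ?_⟩
  have hbregman := le_bregman_of_increment_le
    (ψ := fun h => c * q * min ((h / 2) ^ (p - 1)) ((h / 2) ^ (q - 1)))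
    (fun t => hasDerivWithinAt_splicedDeriv_Ici_zero (by linarith) habc hapcq hf₁ hf₂)
    (fun h hh => by positivity)
    (fun y z hy hyz => splicedDeriv_sub_ge hapcq hcq.le (by linarith) (by linarith) hy hyz) hx hy
  rw [ge_iff_le, deriv_eq_splicedDeriv (by linarith) habc hapcq hf₁ hf₂ hy]
  refine le_trans ?_ hbregman
  set d := |x - y|
  have hd : 0 ≤ d := abs_nonneg _
  calc 2 * (c * q) / 4 ^ q * min (d ^ p) (d ^ q)
      = 2 * (c * q) * (min (d ^ p) (d ^ q) / 4 ^ q) := by ring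
    _ ≤ 2 * (c * q) * min ((d / 4) ^ p) ((d / 4) ^ q) := by
      gcongr
      exact min_rpow_div_rpow_le hpq.le hd (by norm_num)
    _ = d / 2 * (c * q * min ((d / 2 / 2) ^ (p - 1)) ((d / 2 / 2) ^ (q - 1))) := by
      rw [← mul_min_rpow_sub_one (by linarith) (by linarith) (by positivity : 0 ≤ d / 4),
        show d / 2 / 2 = d / 4 by ring]
      ring
end

section
/- Let 2 < p < q and f : [0,∞) → ℝ be as above (f(x) = a·x^p + b for x>1, f(x) = c·x^q for x≤1, with a+b=c, ap=cq, c>0). Let f̂ be the even extension of f to ℝ, i.e. f̂(x) = f(|x|). Then there exists K > 0 such that for all x, y ∈ ℝ: f̂(x) − f̂(y) − f̂'(y)·(x−y) ≥ K · min(|x−y|^p, |x−y|^q). -/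
/-!
The derivative of `f̂` is `c q ψ`, where `ψ t = sign t * min (|t| ^ (p - 1)) (|t| ^ (q - 1))`.
This `ψ` is odd, and nonnegative and superadditive on `[0, ∞)` because `u ↦ u ^ P` is
superadditive for `P ≥ 1`; hence `ψ` is monotone (so `f̂` is convex) and
`ψ t - ψ s ≥ ψ ((t - s) / 2)` for `s ≤ t`. Splitting the Bregman divergence at the midpoint `m`
of `x` and `y` and using convexity on both halves bounds it below by
`(f̂' m - f̂' y) (x - y) / 2 ≥ 2 c q min ((|x - y| / 4) ^ p, (|x - y| / 4) ^ q)`.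
-/

open Real Set Filter Topology

theorem hasDerivAt_of_eventually_hasDerivAt {E : Type*} [NormedAddCommGroup E] [NormedSpace ℝ E]
    {F g : ℝ → E} {x : ℝ} (hd : ∀ᶠ y in 𝓝[≠] x, HasDerivAt F (g y) y)
    (hF : ContinuousAt F x) (hg : ContinuousAt g x) : HasDerivAt F (g x) x := by
  have hdiff : DifferentiableOn ℝ F {y | HasDerivAt F (g y) y} :=
    fun y hy => hy.differentiableAt.differentiableWithinAt
  have hlim {l : Filter ℝ} (hl : l ≤ 𝓝[≠] x) : Tendsto (deriv F) l (𝓝 (g x)) :=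
    (hg.tendsto.mono_left (hl.trans nhdsWithin_le_nhds)).congr'
      ((hd.filter_mono hl).mono fun y hy => hy.deriv.symm)
  have hright := hasDerivWithinAt_Ici_of_tendsto_deriv hdiff hF.continuousWithinAt
    (nhdsGT_le_nhdsNE x hd) (hlim (nhdsGT_le_nhdsNE x))
  have hleft := hasDerivWithinAt_Iic_of_tendsto_deriv hdiff hF.continuousWithinAt
    (nhdsLT_le_nhdsNE x hd) (hlim (nhdsLT_le_nhdsNE x))
  simpa using hleft.union hright

theorem hasDerivAt_of_hasDerivAt_off_finite {E : Type*} [NormedAddCommGroup E]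
    [NormedSpace ℝ E] {F g : ℝ → E} {s : Set ℝ} (hs : s.Finite) (hF : Continuous F)
    (hg : Continuous g) (hd : ∀ y ∉ s, HasDerivAt F (g y) y) (x : ℝ) :
    HasDerivAt F (g x) x := by
  refine hasDerivAt_of_eventually_hasDerivAt ?_ hF.continuousAt hg.continuousAt
  have hfar : (s \ {x})ᶜ ∈ 𝓝 x := (hs.sdiff).isClosed.compl_mem_nhds (by simp)
  filter_upwards [nhdsWithin_le_nhds hfar, self_mem_nhdsWithin] with y hy hyx
  exact hd y fun hys => hy ⟨hys, hyx⟩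

theorem HasDerivAt.neg_of_even {F : ℝ → ℝ} (hF : ∀ x, F (-x) = F x) {d y : ℝ}
    (h : HasDerivAt F d y) : HasDerivAt F (-d) (-y) := by
  rw [← neg_neg y] at h
  simpa [Function.comp_def, hF] using h.comp (-y) (hasDerivAt_neg (-y))

theorem mul_sub_le_sub_of_monotone_deriv {F F' : ℝ → ℝ} (hF : ∀ t, HasDerivAt F (F' t) t)
    (hF' : Monotone F') (x y : ℝ) : F' y * (x - y) ≤ F x - F y := by
  have hcont : Continuous F := continuous_iff_continuousAt.2 fun t => (hF t).continuousAt
  rcases lt_trichotomy x y with hxy | rfl | hyx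
  · obtain ⟨ξ, hξ, hslope⟩ :=
      exists_hasDerivAt_eq_slope F F' hxy hcont.continuousOn fun t _ => hF t
    rw [eq_div_iff (sub_ne_zero.2 hxy.ne')] at hslope
    nlinarith [hF' hξ.2.le]
  · simp
  · obtain ⟨ξ, hξ, hslope⟩ :=
      exists_hasDerivAt_eq_slope F F' hyx hcont.continuousOn fun t _ => hF t
    rw [eq_div_iff (sub_ne_zero.2 hyx.ne')] at hslope
    nlinarith [hF' hξ.1.le]

theorem sub_mul_le_bregman_of_monotone_deriv {F F' : ℝ → ℝ}
    (hF : ∀ t, HasDerivAt F (F' t) t) (hF' : Monotone F') (x y : ℝ) :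
    (F' ((x + y) / 2) - F' y) * ((x - y) / 2) ≤ F x - F y - F' y * (x - y) := by
  have h₁ := mul_sub_le_sub_of_monotone_deriv hF hF' ((x + y) / 2) y
  have h₂ := mul_sub_le_sub_of_monotone_deriv hF hF' x ((x + y) / 2)
  linear_combination h₁ + h₂

section OddSuperadditive

variable {ψ : ℝ → ℝ} (hodd : ∀ t, ψ (-t) = -ψ t) (hnonneg : ∀ t, 0 ≤ t → 0 ≤ ψ t)
  (hsuper : ∀ u v, 0 ≤ u → 0 ≤ v → ψ u + ψ v ≤ ψ (u + v))
include hodd hnonneg hsuper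

theorem half_le_sub_of_odd_of_superadditive {s t : ℝ} (hst : s ≤ t) :
    ψ ((t - s) / 2) ≤ ψ t - ψ s := by
  wlog hmid : 0 ≤ s + t generalizing s t
  · have := this (neg_le_neg hst) (by linarith)
    rw [hodd, hodd, show -s - -t = t - s by ring] at this
    linarith
  have hs : ψ s ≤ ψ ((s + t) / 2) := by
    rcases le_or_gt 0 s with hs | hs
    · have := hsuper s ((t - s) / 2) hs (by linarith)
      rw [show s + (t - s) / 2 = (s + t) / 2 by ring] at this
      linarith [hnonneg ((t - s) / 2) (by linarith)]
    · have := hnonneg (-s) (by linarith)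
      rw [hodd] at this
      linarith [hnonneg ((s + t) / 2) (by linarith)]
  have ht := hsuper ((s + t) / 2) ((t - s) / 2) (by linarith) (by linarith)
  rw [show (s + t) / 2 + (t - s) / 2 = t by ring] at ht
  linarith

theorem monotone_of_odd_of_superadditive : Monotone ψ := fun s t hst =>
  sub_nonneg.1 <| (hnonneg _ (by linarith)).trans
    (half_le_sub_of_odd_of_superadditive hodd hnonneg hsuper hst)

theorem abs_half_mul_abs_le_of_odd_of_superadditive (s t : ℝ) :
    ψ (|t - s| / 2) * |t - s| ≤ (ψ t - ψ s) * (t - s) := by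
  rcases le_total s t with hst | hts
  · rw [abs_of_nonneg (sub_nonneg.2 hst)]
    exact mul_le_mul_of_nonneg_right
      (half_le_sub_of_odd_of_superadditive hodd hnonneg hsuper hst) (sub_nonneg.2 hst)
  · rw [abs_sub_comm, abs_of_nonneg (sub_nonneg.2 hts),
      show (ψ t - ψ s) * (t - s) = (ψ s - ψ t) * (s - t) by ring]
    exact mul_le_mul_of_nonneg_right
      (half_le_sub_of_odd_of_superadditive hodd hnonneg hsuper hts) (sub_nonneg.2 hts)

end OddSuperadditive

theorem min_rpow_add_le {P Q u v : ℝ} (hP : 1 ≤ P) (hQ : 1 ≤ Q) (hu : 0 ≤ u) (hv : 0 ≤ v) :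
    min (u ^ P) (u ^ Q) + min (v ^ P) (v ^ Q) ≤ min ((u + v) ^ P) ((u + v) ^ Q) :=
  le_min
    ((add_le_add (min_le_left _ _) (min_le_left _ _)).trans (add_rpow_le_rpow_add hu hv hP))
    ((add_le_add (min_le_right _ _) (min_le_right _ _)).trans (add_rpow_le_rpow_add hu hv hQ))

theorem inv_rpow_mul_min_le_min_div_rpow {P Q r l : ℝ} (hPQ : P ≤ Q) (hr : 0 ≤ r) (hl : 1 ≤ l) :
    (l ^ Q)⁻¹ * min (r ^ P) (r ^ Q) ≤ min ((r / l) ^ P) ((r / l) ^ Q) := by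
  have hl0 : 0 < l := by linarith
  rw [div_rpow hr hl0.le, div_rpow hr hl0.le, div_eq_inv_mul, div_eq_inv_mul]
  refine le_min ?_ (mul_le_mul_of_nonneg_left (min_le_right _ _) (by positivity))
  calc (l ^ Q)⁻¹ * min (r ^ P) (r ^ Q) ≤ (l ^ Q)⁻¹ * r ^ P :=
        mul_le_mul_of_nonneg_left (min_le_left _ _) (by positivity)
    _ ≤ (l ^ P)⁻¹ * r ^ P :=
        mul_le_mul_of_nonneg_right
          (inv_anti₀ (by positivity) (rpow_le_rpow_of_exponent_le hl hPQ)) (by positivity)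

/-- `sign t * min (|t| ^ P) (|t| ^ Q)`, written so that continuity at `0` is evident. -/
noncomputable def oddMinRpow (P Q t : ℝ) : ℝ := t * min (|t| ^ (P - 1)) (|t| ^ (Q - 1))

theorem oddMinRpow_neg (P Q t : ℝ) : oddMinRpow P Q (-t) = -oddMinRpow P Q t := by
  simp [oddMinRpow]

theorem mul_min_rpow_sub_one_s2 {P Q t : ℝ} (hP : P ≠ 0) (hQ : Q ≠ 0) (ht : 0 ≤ t) :
    t * min (t ^ (P - 1)) (t ^ (Q - 1)) = min (t ^ P) (t ^ Q) := by
  have hmul {R : ℝ} (hR : R ≠ 0) : t * t ^ (R - 1) = t ^ R := by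
    rw [← rpow_one_add' ht (by simpa using hR), add_sub_cancel]
  rw [mul_min_of_nonneg _ _ ht, hmul hP, hmul hQ]

theorem oddMinRpow_of_nonneg {P Q t : ℝ} (hP : P ≠ 0) (hQ : Q ≠ 0) (ht : 0 ≤ t) :
    oddMinRpow P Q t = min (t ^ P) (t ^ Q) := by
  rw [oddMinRpow, abs_of_nonneg ht, mul_min_rpow_sub_one_s2 hP hQ ht]

theorem continuous_oddMinRpow {P Q : ℝ} (hP : 1 ≤ P) (hQ : 1 ≤ Q) :
    Continuous (oddMinRpow P Q) :=
  continuous_id.mul <|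
    (continuous_abs.rpow_const fun _ => .inr (by linarith)).min
      (continuous_abs.rpow_const fun _ => .inr (by linarith))

section OddMinRpow

variable {P Q : ℝ} (hP : 1 ≤ P) (hQ : 1 ≤ Q)
include hP hQ

theorem oddMinRpow_superadditive {u v : ℝ} (hu : 0 ≤ u) (hv : 0 ≤ v) :
    oddMinRpow P Q u + oddMinRpow P Q v ≤ oddMinRpow P Q (u + v) := by
  have hP0 : P ≠ 0 := by linarith
  have hQ0 : Q ≠ 0 := by linarith
  rw [oddMinRpow_of_nonneg hP0 hQ0 hu, oddMinRpow_of_nonneg hP0 hQ0 hv,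
    oddMinRpow_of_nonneg hP0 hQ0 (add_nonneg hu hv)]
  exact min_rpow_add_le hP hQ hu hv

theorem oddMinRpow_nonneg {t : ℝ} (ht : 0 ≤ t) : 0 ≤ oddMinRpow P Q t := by
  rw [oddMinRpow_of_nonneg (by linarith) (by linarith) ht]
  exact le_min (rpow_nonneg ht _) (rpow_nonneg ht _)

theorem monotone_oddMinRpow : Monotone (oddMinRpow P Q) :=
  monotone_of_odd_of_superadditive (oddMinRpow_neg P Q) (fun _ => oddMinRpow_nonneg hP hQ)
    (fun _ _ => oddMinRpow_superadditive hP hQ)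

theorem oddMinRpow_abs_half_mul_abs_le (s t : ℝ) :
    oddMinRpow P Q (|t - s| / 2) * |t - s| ≤ (oddMinRpow P Q t - oddMinRpow P Q s) * (t - s) :=
  abs_half_mul_abs_le_of_odd_of_superadditive (oddMinRpow_neg P Q)
    (fun _ => oddMinRpow_nonneg hP hQ) (fun _ _ => oddMinRpow_superadditive hP hQ) s t

end OddMinRpow

noncomputable def evenGluedRpow (p q a b c x : ℝ) : ℝ :=
  if |x| ≤ 1 then c * |x| ^ q else a * |x| ^ p + b

theorem evenGluedRpow_neg (p q a b c x : ℝ) :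
    evenGluedRpow p q a b c (-x) = evenGluedRpow p q a b c x := by
  simp [evenGluedRpow]

theorem continuous_evenGluedRpow {p q a b c : ℝ} (hp : 0 ≤ p) (hq : 0 ≤ q) (habc : a + b = c) :
    Continuous (evenGluedRpow p q a b c) :=
  Continuous.if_le (continuous_const.mul (continuous_abs.rpow_const fun _ => .inr hq))
    ((continuous_const.mul (continuous_abs.rpow_const fun _ => .inr hp)).add continuous_const)
    continuous_abs continuous_const fun x hx => by simp [hx, habc]

theorem hasDerivAt_evenGluedRpow_of_lt_one {p q a b c y : ℝ} (hy₀ : 0 < y) (hy₁ : y < 1) :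
    HasDerivAt (evenGluedRpow p q a b c) (c * q * y ^ (q - 1)) y := by
  have hloc : (fun x => c * x ^ q) =ᶠ[𝓝 y] evenGluedRpow p q a b c := by
    filter_upwards [Ioo_mem_nhds hy₀ hy₁] with x hx
    simp [evenGluedRpow, abs_of_pos hx.1, hx.2.le]
  simpa [mul_assoc] using
    ((hasDerivAt_rpow_const (.inl hy₀.ne')).const_mul c).congr_of_eventuallyEq hloc.symm

theorem hasDerivAt_evenGluedRpow_of_one_lt {p q a b c y : ℝ} (hy : 1 < y) :
    HasDerivAt (evenGluedRpow p q a b c) (a * p * y ^ (p - 1)) y := by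
  have hloc : (fun x => a * x ^ p + b) =ᶠ[𝓝 y] evenGluedRpow p q a b c := by
    filter_upwards [Ioi_mem_nhds hy] with x (hx : 1 < x)
    simp [evenGluedRpow, abs_of_pos (one_pos.trans hx), not_le.2 hx]
  simpa [mul_assoc] using
    (((hasDerivAt_rpow_const (.inl (one_pos.trans hy).ne')).const_mul a).add_const b
      ).congr_of_eventuallyEq hloc.symm

theorem hasDerivAt_evenGluedRpow {p q a b c : ℝ} (hp : 2 ≤ p) (hpq : p ≤ q) (habc : a + b = c)
    (hapcq : a * p = c * q) (y : ℝ) :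
    HasDerivAt (evenGluedRpow p q a b c) (c * q * oddMinRpow (p - 1) (q - 1) y) y := by
  have hpos : ∀ z, 0 < z → z ≠ 1 →
      HasDerivAt (evenGluedRpow p q a b c) (c * q * oddMinRpow (p - 1) (q - 1) z) z := by
    intro z hz₀ hz₁
    rw [oddMinRpow_of_nonneg (by linarith) (by linarith) hz₀.le]
    rcases hz₁.lt_or_gt with hz₁ | hz₁
    · rw [min_eq_right (rpow_le_rpow_of_exponent_ge hz₀ hz₁.le (by linarith))]
      exact hasDerivAt_evenGluedRpow_of_lt_one hz₀ hz₁
    · rw [min_eq_left (rpow_le_rpow_of_exponent_le hz₁.le (by linarith)), ← hapcq]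
      exact hasDerivAt_evenGluedRpow_of_one_lt hz₁
  refine hasDerivAt_of_hasDerivAt_off_finite (s := {-1, 0, 1}) (by simp)
    (continuous_evenGluedRpow (by linarith) (by linarith) habc)
    (continuous_const.mul (continuous_oddMinRpow (by linarith) (by linarith))) (fun z hz => ?_) y
  simp only [mem_insert_iff, mem_singleton_iff, not_or] at hz
  rcases lt_or_gt_of_ne hz.2.1 with hz₀ | hz₀
  · have := (hpos (-z) (by linarith) fun h => hz.1 (by linarith)).neg_of_even
      (evenGluedRpow_neg p q a b c)
    simpa [oddMinRpow_neg] using this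
  · exact hpos z hz₀ hz.2.2

theorem min_rpow_le_bregman {F : ℝ → ℝ} {p q C : ℝ} (hp : 2 ≤ p) (hpq : p ≤ q) (hC : 0 ≤ C)
    (hF : ∀ t, HasDerivAt F (C * oddMinRpow (p - 1) (q - 1) t) t) (x y : ℝ) :
    2 * C * (4 ^ q)⁻¹ * min (|x - y| ^ p) (|x - y| ^ q) ≤
      F x - F y - C * oddMinRpow (p - 1) (q - 1) y * (x - y) := by
  have hgap := oddMinRpow_abs_half_mul_abs_le (P := p - 1) (Q := q - 1)
    (by linarith) (by linarith) y ((x + y) / 2)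
  rw [show (x + y) / 2 - y = (x - y) / 2 by ring, abs_div, abs_two, div_div,
    show (2 : ℝ) * 2 = 4 by norm_num] at hgap
  have hr : 0 ≤ |x - y| / 4 := by positivity
  have hψ : |x - y| / 4 * oddMinRpow (p - 1) (q - 1) (|x - y| / 4)
      = min ((|x - y| / 4) ^ p) ((|x - y| / 4) ^ q) := by
    rw [oddMinRpow_of_nonneg (by linarith) (by linarith) hr,
      mul_min_rpow_sub_one_s2 (by linarith) (by linarith) hr]
  have hbregman := sub_mul_le_bregman_of_monotone_deriv hF
    ((monotone_oddMinRpow (by linarith) (by linarith)).const_mul hC) x y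
  calc 2 * C * (4 ^ q)⁻¹ * min (|x - y| ^ p) (|x - y| ^ q)
      = 2 * C * ((4 ^ q)⁻¹ * min (|x - y| ^ p) (|x - y| ^ q)) := by ring
    _ ≤ 2 * C * min ((|x - y| / 4) ^ p) ((|x - y| / 4) ^ q) := by
      gcongr; exact inv_rpow_mul_min_le_min_div_rpow hpq (abs_nonneg _) (by norm_num)
    _ = C * (oddMinRpow (p - 1) (q - 1) (|x - y| / 4) * (|x - y| / 2)) := by
      rw [← hψ]; ring
    _ ≤ C * ((oddMinRpow (p - 1) (q - 1) ((x + y) / 2) - oddMinRpow (p - 1) (q - 1) y)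
          * ((x - y) / 2)) := by gcongr
    _ ≤ _ := by linear_combination hbregman

theorem stmt2 (p q a b c : ℝ) (hp : 2 < p) (hpq : p < q)
    (hc : 0 < c) (habc : a + b = c) (hapcq : a * p = c * q)
    (f : ℝ → ℝ)
    (hf₁ : ∀ x : ℝ, 1 < x → f x = a * x ^ p + b)
    (hf₂ : ∀ x : ℝ, 0 ≤ x → x ≤ 1 → f x = c * x ^ q)
    (fhat : ℝ → ℝ) (hfhat : ∀ x : ℝ, fhat x = f |x|) :
    ∃ K > (0:ℝ), ∀ x y : ℝ,
      fhat x - fhat y - deriv fhat y * (x - y) ≥ K * min (|x - y| ^ p) (|x - y| ^ q) := by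
  obtain rfl : fhat = evenGluedRpow p q a b c := funext fun x => by
    rw [hfhat, evenGluedRpow]
    split_ifs with hx
    exacts [hf₂ _ (abs_nonneg x) hx, hf₁ _ (not_le.1 hx)]
  have hcq : 0 < c * q := mul_pos hc (by linarith)
  have hD := hasDerivAt_evenGluedRpow hp.le hpq.le habc hapcq
  refine ⟨2 * (c * q) * (4 ^ q)⁻¹, by positivity, fun x y => ?_⟩
  rw [(hD y).deriv]
  exact min_rpow_le_bregman hp.le hpq.le hcq.le hD x y
end

section
/- Let 2 < p < q and let f̄ : ℝⁿ → ℝ be defined by f̄(x) = f(|x|), where f(t) = a·t^p + b for t > 1 and f(t) = c·t^q for 0 ≤ t ≤ 1, with a+b=c, ap=cq, c > 0. Then there exists a constant c₁ > 0, independent of x and y, such that for all x, y ∈ ℝⁿ: f̄(x) − f̄(y) − ⟨∇f̄(y), x−y⟩ ≥ c₁ · min(|x−y|^p, |x−y|^q). -/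
/-!
Write `s = ‖x‖`, `t = ‖y‖`, `r = ‖x - y‖`. Since `f' t = c q · min (t ^ (p - 1)) (t ^ (q - 1))`,
the gradient of `f ‖·‖` at `y` is `c q · min (t ^ (p - 2)) (t ^ (q - 2)) • y`, and the Bregman
divergence splits into the one-dimensional divergence `f s - f t - f' t · (s - t)` plus
`c q · min (t ^ (p - 2)) (t ^ (q - 2)) · (r ^ 2 - (s - t) ^ 2) / 2 ≥ 0`.
Comparing `f` with its tangents at `t` and at `(s + t) / 2`, superadditivity of `u ↦ u ^ α`
(`α ≥ 1`) bounds the one-dimensional part below by `c q · min (δ ^ p) (δ ^ q)`, `δ = |s - t| / 2`.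
If `|s - t| ≥ r / 2` this suffices; otherwise `t ≥ r / 4` and `r ^ 2 - (s - t) ^ 2 ≥ r ^ 2 / 2`,
so the second term is at least `c q · min ((r / 4) ^ p) ((r / 4) ^ q)`. Either way
`c₁ = c q / 4 ^ q` works.
-/

open RealInnerProductSpace Set Real

noncomputable def minRpow (a b t : ℝ) : ℝ := min (t ^ a) (t ^ b)

section minRpow

variable {a b e t u v k : ℝ}

lemma minRpow_nonneg (ht : 0 ≤ t) : 0 ≤ minRpow a b t :=
  le_min (rpow_nonneg ht a) (rpow_nonneg ht b)

lemma minRpow_of_le_one (hab : a ≤ b) (ht₀ : 0 < t) (ht₁ : t ≤ 1) : minRpow a b t = t ^ b :=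
  min_eq_right (rpow_le_rpow_of_exponent_ge ht₀ ht₁ hab)

lemma minRpow_of_one_le (hab : a ≤ b) (ht : 1 ≤ t) : minRpow a b t = t ^ a :=
  min_eq_left (rpow_le_rpow_of_exponent_le ht hab)

lemma monotoneOn_minRpow (ha : 0 ≤ a) (hb : 0 ≤ b) : MonotoneOn (minRpow a b) (Ici 0) :=
  fun _ hs _ _ hst => min_le_min (rpow_le_rpow hs hst ha) (rpow_le_rpow hs hst hb)

lemma minRpow_sub_mul_rpow (ha : a ≠ 0) (hb : b ≠ 0) (ht : 0 ≤ t) :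
    minRpow (a - e) (b - e) t * t ^ e = minRpow a b t := by
  rw [minRpow, minRpow, min_mul_of_nonneg _ _ (rpow_nonneg ht e),
    ← rpow_add' ht (by rwa [sub_add_cancel]), ← rpow_add' ht (by rwa [sub_add_cancel]),
    sub_add_cancel, sub_add_cancel]

lemma minRpow_div_le (hab : a ≤ b) (hk : 1 ≤ k) (ht : 0 ≤ t) :
    minRpow a b t / k ^ b ≤ minRpow a b (t / k) := by
  have hk₀ : 0 < k := one_pos.trans_le hk
  rw [minRpow, minRpow, div_rpow ht hk₀.le, div_rpow ht hk₀.le,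
    ← min_div_div_right (rpow_nonneg hk₀.le b)]
  exact min_le_min (div_le_div_of_nonneg_left (rpow_nonneg ht a) (rpow_pos_of_pos hk₀ a)
    (rpow_le_rpow_of_exponent_le hk hab)) le_rfl

lemma minRpow_sub_le_sub (ha : 1 ≤ a) (hb : 1 ≤ b) (hu : 0 ≤ u) (huv : u ≤ v) :
    minRpow a b (v - u) ≤ minRpow a b v - minRpow a b u := by
  have hvu : 0 ≤ v - u := sub_nonneg.mpr huv
  have h_sup : ∀ {e : ℝ}, 1 ≤ e → (v - u) ^ e ≤ v ^ e - u ^ e := fun he => by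
    have := add_rpow_le_rpow_add hu hvu he
    rw [add_sub_cancel] at this
    linarith
  rcases min_choice (v ^ a) (v ^ b) with h | h
  · calc minRpow a b (v - u) ≤ (v - u) ^ a := min_le_left _ _
      _ ≤ v ^ a - u ^ a := h_sup ha
      _ ≤ minRpow a b v - minRpow a b u := by
        rw [minRpow, h]; exact sub_le_sub_left (min_le_left _ _) _
  · calc minRpow a b (v - u) ≤ (v - u) ^ b := min_le_right _ _
      _ ≤ v ^ b - u ^ b := h_sup hb
      _ ≤ minRpow a b v - minRpow a b u := by
        rw [minRpow, h]; exact sub_le_sub_left (min_le_right _ _) _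

end minRpow

lemma minRpow_le_sub_mul_sub {p q u v : ℝ} (hp : 2 ≤ p) (hq : 2 ≤ q) (hu : 0 ≤ u) (huv : u ≤ v) :
    minRpow p q (v - u) ≤ (minRpow (p - 1) (q - 1) v - minRpow (p - 1) (q - 1) u) * (v - u) := by
  have hvu : 0 ≤ v - u := sub_nonneg.mpr huv
  rw [← minRpow_sub_mul_rpow (e := 1) (by linarith) (by linarith) hvu, rpow_one]
  exact mul_le_mul_of_nonneg_right
    (minRpow_sub_le_sub (by linarith) (by linarith) hu huv) hvu

theorem add_mul_sub_le_of_hasDerivAt_of_monotoneOn {f g : ℝ → ℝ} {D : Set ℝ} (hD : Convex ℝ D)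
    (hf : ContinuousOn f D) (hderiv : ∀ x ∈ interior D, HasDerivAt f (g x) x)
    (hg : MonotoneOn g D) {u w : ℝ} (hu : u ∈ D) (hw : w ∈ D) :
    f u + g u * (w - u) ≤ f w := by
  have hsub : ∀ {x y}, x ∈ D → y ∈ D → Icc x y ⊆ D := fun hx hy => hD.ordConnected.out hx hy
  have hint : ∀ {x y}, x ∈ D → y ∈ D → interior (Icc x y) ⊆ interior D :=
    fun hx hy => interior_mono (hsub hx hy)
  have hdiff : ∀ {x y}, x ∈ D → y ∈ D → DifferentiableOn ℝ f (interior (Icc x y)) :=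
    fun hx hy z hz => (hderiv z (hint hx hy hz)).differentiableAt.differentiableWithinAt
  rcases le_total u w with huw | hwu
  · have := (convex_Icc u w).mul_sub_le_image_sub_of_le_deriv (hf.mono (hsub hu hw))
      (hdiff hu hw) (C := g u) (fun x hx => ?_) u (left_mem_Icc.mpr huw) w
      (right_mem_Icc.mpr huw) huw
    · linarith
    rw [(hderiv x (hint hu hw hx)).deriv]
    rw [interior_Icc] at hx
    exact hg hu (hsub hu hw (Ioo_subset_Icc_self hx)) hx.1.le
  · have := (convex_Icc w u).image_sub_le_mul_sub_of_deriv_le (hf.mono (hsub hw hu))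
      (hdiff hw hu) (C := g u) (fun x hx => ?_) w (left_mem_Icc.mpr hwu) u
      (right_mem_Icc.mpr hwu) hwu
    · linarith
    rw [(hderiv x (hint hw hu hx)).deriv]
    rw [interior_Icc] at hx
    exact hg (hsub hw hu (Ioo_subset_Icc_self hx)) hu hx.2.le

theorem mul_minRpow_half_le_bregman {f : ℝ → ℝ} {K p q s t : ℝ} (hK : 0 ≤ K) (hp : 2 ≤ p)
    (hq : 2 ≤ q) (hf : ContinuousOn f (Ici 0))
    (hderiv : ∀ t > 0, HasDerivAt f (K * minRpow (p - 1) (q - 1) t) t)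
    (hs : 0 ≤ s) (ht : 0 ≤ t) :
    K * minRpow p q (|s - t| / 2) ≤ f s - f t - K * minRpow (p - 1) (q - 1) t * (s - t) := by
  set μ := minRpow (p - 1) (q - 1)
  have htangent : ∀ {u w : ℝ}, 0 ≤ u → 0 ≤ w → f u + K * μ u * (w - u) ≤ f w :=
    fun hu hw => add_mul_sub_le_of_hasDerivAt_of_monotoneOn (convex_Ici 0) hf
      (fun x hx => hderiv x (by rwa [interior_Ici] at hx))
      (fun x hx y hy hxy => mul_le_mul_of_nonneg_left
        (monotoneOn_minRpow (by linarith) (by linarith) hx hy hxy) hK) hu hw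
  set m := (s + t) / 2
  have hm : 0 ≤ m := by positivity
  have hmid : K * ((μ m - μ t) * (m - t)) ≤ f s - f t - K * μ t * (s - t) := by
    have h₁ := htangent ht hm
    have h₂ := htangent hm hs
    have e₁ : s - m = m - t := by ring
    have e₂ : s - t = 2 * (m - t) := by ring
    rw [e₁] at h₂
    rw [e₂]
    linarith
  refine le_trans (mul_le_mul_of_nonneg_left ?_ hK) hmid
  have habs : |s - t| / 2 = |m - t| := by
    rw [show m - t = (s - t) / 2 by ring, abs_div, abs_two]
  rw [habs]
  rcases le_total t m with htm | hmt
  · rw [abs_of_nonneg (sub_nonneg.mpr htm)]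
    exact minRpow_le_sub_mul_sub hp hq ht htm
  · rw [abs_of_nonpos (sub_nonpos.mpr hmt), neg_sub,
      show (μ m - μ t) * (m - t) = (μ t - μ m) * (t - m) by ring]
    exact minRpow_le_sub_mul_sub hp hq hm hmt

theorem mul_minRpow_quarter_le {K p q s t r B : ℝ} (hK : 0 ≤ K) (hp : 2 ≤ p) (hq : 2 ≤ q)
    (ht : 0 ≤ t) (hsr : |s - t| ≤ r) (hr : r ≤ s + t)
    (hB : K * minRpow p q (|s - t| / 2) ≤ B) :
    K * minRpow p q (r / 4) ≤ B + K * minRpow (p - 2) (q - 2) t * (r ^ 2 - (s - t) ^ 2) / 2 := by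
  have hr₀ : 0 ≤ r := (abs_nonneg _).trans hsr
  have hmono := monotoneOn_minRpow (show 0 ≤ p by linarith) (show 0 ≤ q by linarith)
  rcases le_or_gt (r / 2) |s - t| with hfar | hnear
  · have hsq : (s - t) ^ 2 ≤ r ^ 2 := sq_le_sq' (abs_le.mp hsr).1 (abs_le.mp hsr).2
    have hcorr : 0 ≤ K * minRpow (p - 2) (q - 2) t * (r ^ 2 - (s - t) ^ 2) / 2 := by
      have := minRpow_nonneg (a := p - 2) (b := q - 2) ht
      have : 0 ≤ r ^ 2 - (s - t) ^ 2 := by linarith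
      positivity
    have : K * minRpow p q (r / 4) ≤ K * minRpow p q (|s - t| / 2) :=
      mul_le_mul_of_nonneg_left
        (hmono (mem_Ici.mpr (by positivity)) (mem_Ici.mpr (by positivity)) (by linarith)) hK
    linarith
  · have hB₀ : 0 ≤ B := le_trans (mul_nonneg hK (minRpow_nonneg (by positivity))) hB
    have htr : r / 4 ≤ t := by linarith [le_abs_self (s - t)]
    have hsq : (r / 4) ^ 2 ≤ (r ^ 2 - (s - t) ^ 2) / 2 := by
      nlinarith [sq_abs (s - t), abs_nonneg (s - t)]
    have hm : minRpow (p - 2) (q - 2) (r / 4) ≤ minRpow (p - 2) (q - 2) t :=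
      monotoneOn_minRpow (by linarith) (by linarith) (mem_Ici.mpr (by positivity)) ht htr
    calc K * minRpow p q (r / 4)
        = K * (minRpow (p - 2) (q - 2) (r / 4) * (r / 4) ^ 2) := by
          rw [← rpow_two, minRpow_sub_mul_rpow (by linarith) (by linarith) (by positivity)]
      _ ≤ K * (minRpow (p - 2) (q - 2) t * ((r ^ 2 - (s - t) ^ 2) / 2)) :=
          mul_le_mul_of_nonneg_left (mul_le_mul hm hsq (by positivity) (minRpow_nonneg ht)) hK
      _ ≤ B + K * minRpow (p - 2) (q - 2) t * (r ^ 2 - (s - t) ^ 2) / 2 := by linarith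

lemma real_inner_smul_sub_eq {E : Type*} [NormedAddCommGroup E] [InnerProductSpace ℝ E]
    (l : ℝ) (x y : E) :
    ⟪l • y, x - y⟫ = l * ‖y‖ * (‖x‖ - ‖y‖) - l * (‖x - y‖ ^ 2 - (‖x‖ - ‖y‖) ^ 2) / 2 := by
  rw [real_inner_smul_left, inner_sub_right, real_inner_self_eq_norm_sq,
    real_inner_comm, ← sub_eq_zero]
  linear_combination (l / 2) * norm_sub_sq_real x y

lemma hasFDerivAt_norm {E : Type*} [NormedAddCommGroup E] [InnerProductSpace ℝ E] {y : E}
    (hy : y ≠ 0) : HasFDerivAt (‖·‖) (‖y‖⁻¹ • innerSL ℝ y) y := by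
  have h := (hasStrictFDerivAt_norm_sq y).hasFDerivAt.sqrt (by positivity)
  simp only [sqrt_sq (norm_nonneg _)] at h
  convert h using 1
  ext z
  simp only [smul_apply, coe_innerSL_apply, smul_eq_mul, one_div,
    mul_inv_rev, nsmul_eq_mul, Nat.cast_ofNat]
  field_simp

theorem HasDerivAt.hasGradientAt_comp_norm {E : Type*} [NormedAddCommGroup E]
    [InnerProductSpace ℝ E] [CompleteSpace E] {f : ℝ → ℝ} {f' : ℝ} {y : E} (hy : y ≠ 0)
    (hf : HasDerivAt f f' ‖y‖) : HasGradientAt (fun z => f ‖z‖) ((f' / ‖y‖) • y) y := by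
  rw [hasGradientAt_iff_hasFDerivAt]
  refine (hf.comp_hasFDerivAt y (hasFDerivAt_norm hy)).congr_fderiv ?_
  ext z
  simp only [smul_apply, coe_innerSL_apply, smul_eq_mul, map_smul,
    InnerProductSpace.toDual_apply_apply]
  ring

section glued

variable {p q a b c : ℝ} {f : ℝ → ℝ}

theorem hasDerivAt_of_glued (hpq : p ≤ q) (habc : a + b = c) (hapcq : a * p = c * q)
    (hf₁ : ∀ t : ℝ, 1 < t → f t = a * t ^ p + b)
    (hf₂ : ∀ t : ℝ, 0 ≤ t → t ≤ 1 → f t = c * t ^ q) {t : ℝ} (ht : 0 < t) :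
    HasDerivAt f (c * q * minRpow (p - 1) (q - 1) t) t := by
  have hpq' : p - 1 ≤ q - 1 := by linarith
  have hlow : HasDerivAt (fun x => c * x ^ q) (c * (q * t ^ (q - 1))) t :=
    (hasDerivAt_rpow_const (Or.inl ht.ne')).const_mul c
  have hhigh : HasDerivAt (fun x => a * x ^ p + b) (a * (p * t ^ (p - 1))) t :=
    ((hasDerivAt_rpow_const (Or.inl ht.ne')).const_mul a).add_const b
  rcases lt_trichotomy t 1 with h1 | rfl | h1
  · rw [minRpow_of_le_one hpq' ht h1.le, mul_assoc]
    refine hlow.congr_of_eventuallyEq ?_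
    filter_upwards [Ioo_mem_nhds ht h1] with x hx using hf₂ x hx.1.le hx.2.le
  · have hf₁' : ∀ x ∈ Ici (1 : ℝ), f x = a * x ^ p + b := fun x hx => by
      rcases (mem_Ici.mp hx).eq_or_lt with rfl | hx
      · rw [hf₂ 1 zero_le_one le_rfl, one_rpow, one_rpow]; linarith
      · exact hf₁ x hx
    simp only [one_rpow, mul_one] at hlow hhigh
    have hleft : HasDerivWithinAt f (c * q) (Icc 0 1) 1 :=
      hlow.hasDerivWithinAt.congr (fun x hx => hf₂ x hx.1 hx.2) (hf₂ 1 zero_le_one le_rfl)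
    have hright : HasDerivWithinAt f (c * q) (Ici 1) 1 := by
      rw [← hapcq]
      exact hhigh.hasDerivWithinAt.congr hf₁' (hf₁' 1 self_mem_Ici)
    have hglued := hleft.union hright
    rw [Icc_union_Ici_eq_Ici zero_le_one] at hglued
    rw [minRpow, one_rpow, one_rpow, min_self, mul_one]
    exact hglued.hasDerivAt (Ici_mem_nhds one_pos)
  · rw [minRpow_of_one_le hpq' h1.le, ← hapcq, mul_assoc]
    refine hhigh.congr_of_eventuallyEq ?_
    filter_upwards [Ioi_mem_nhds h1] with x hx using hf₁ x hx

theorem continuousOn_Ici_of_glued (hq : 0 ≤ q) (hf₂ : ∀ t : ℝ, 0 ≤ t → t ≤ 1 → f t = c * t ^ q)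
    (hf : ∀ t > 0, DifferentiableAt ℝ f t) : ContinuousOn f (Ici 0) := by
  intro t ht
  rcases (mem_Ici.mp ht).eq_or_lt with rfl | ht
  · have hlow : ContinuousWithinAt (fun x => c * x ^ q) (Ici 0) 0 :=
      (continuousAt_const.mul (continuousAt_rpow_const 0 q (Or.inr hq))).continuousWithinAt
    refine hlow.congr_of_eventuallyEq ?_ (hf₂ 0 le_rfl zero_le_one)
    filter_upwards [mem_nhdsWithin_of_mem_nhds (Iio_mem_nhds one_pos), self_mem_nhdsWithin]
      with x hx₁ hx₀ using hf₂ x hx₀ hx₁.le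
  · exact (hf t ht).continuousAt.continuousWithinAt

variable {E : Type*} [NormedAddCommGroup E] [InnerProductSpace ℝ E] [CompleteSpace E]

theorem hasGradientAt_comp_norm_of_glued {K : ℝ} (hp : p ≠ 1) (hq : 1 < q)
    (hf₂ : ∀ t : ℝ, 0 ≤ t → t ≤ 1 → f t = c * t ^ q)
    (hderiv : ∀ t > 0, HasDerivAt f (K * minRpow (p - 1) (q - 1) t) t) (y : E) :
    HasGradientAt (fun z => f ‖z‖) ((K * minRpow (p - 2) (q - 2) ‖y‖) • y) y := by
  rcases eq_or_ne y 0 with rfl | hy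
  · rw [smul_zero, hasGradientAt_iff_hasFDerivAt, map_zero]
    have hlow := (hasFDerivAt_norm_rpow (0 : E) hq).const_mul c
    simp only [norm_zero, map_zero, smul_zero] at hlow
    refine hlow.congr_of_eventuallyEq ?_
    filter_upwards [Metric.closedBall_mem_nhds (0 : E) one_pos] with z hz
    exact hf₂ _ (norm_nonneg z) (mem_closedBall_zero_iff.mp hz)
  · have hy₀ : 0 < ‖y‖ := norm_pos_iff.mpr hy
    convert (hderiv ‖y‖ hy₀).hasGradientAt_comp_norm hy using 2
    rw [← minRpow_sub_mul_rpow (e := 1) (sub_ne_zero.mpr hp) (by linarith) hy₀.le, rpow_one,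
      show p - 1 - 1 = p - 2 by ring, show q - 1 - 1 = q - 2 by ring]
    field_simp

end glued

theorem stmt3 (n : ℕ) (p q a b c : ℝ) (hp : 2 < p) (hpq : p < q)
    (hc : 0 < c) (habc : a + b = c) (hapcq : a * p = c * q)
    (f : ℝ → ℝ)
    (hf₁ : ∀ t : ℝ, 1 < t → f t = a * t ^ p + b)
    (hf₂ : ∀ t : ℝ, 0 ≤ t → t ≤ 1 → f t = c * t ^ q) :
    ∃ c₁ > (0:ℝ), ∀ x y : EuclideanSpace ℝ (Fin n),
      f ‖x‖ - f ‖y‖ - ⟪gradient (fun z : EuclideanSpace ℝ (Fin n) => f ‖z‖) y, x - y⟫ ≥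
        c₁ * min (‖x - y‖ ^ p) (‖x - y‖ ^ q) := by
  have hq : 2 < q := hp.trans hpq
  have hK : 0 < c * q := by positivity
  have hderiv (t : ℝ) (ht : t > 0) : HasDerivAt f (c * q * minRpow (p - 1) (q - 1) t) t :=
    hasDerivAt_of_glued hpq.le habc hapcq hf₁ hf₂ ht
  have hcont := continuousOn_Ici_of_glued (by linarith) hf₂
    (fun t ht => (hderiv t ht).differentiableAt)
  refine ⟨c * q / 4 ^ q, by positivity, fun x y => ?_⟩
  have hB := mul_minRpow_half_le_bregman hK.le hp.le hq.le hcont hderiv (norm_nonneg x)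
    (norm_nonneg y)
  have hquarter := mul_minRpow_quarter_le hK.le hp.le hq.le (norm_nonneg y)
    (abs_norm_sub_norm_le x y) (norm_sub_le x y) hB
  have hscale := minRpow_div_le hpq.le (by norm_num : (1 : ℝ) ≤ 4) (norm_nonneg (x - y))
  have hμ := minRpow_sub_mul_rpow (e := 1) (a := p - 1) (b := q - 1) (by linarith) (by linarith)
    (norm_nonneg y)
  rw [rpow_one, show p - 1 - 1 = p - 2 by ring, show q - 1 - 1 = q - 2 by ring] at hμ
  rw [(hasGradientAt_comp_norm_of_glued (by linarith) (by linarith) hf₂ hderiv y).gradient,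
    real_inner_smul_sub_eq, ge_iff_le]
  calc c * q / 4 ^ q * minRpow p q ‖x - y‖
      = c * q * (minRpow p q ‖x - y‖ / 4 ^ q) := by ring
    _ ≤ c * q * minRpow p q (‖x - y‖ / 4) := mul_le_mul_of_nonneg_left hscale hK.le
    _ ≤ _ := hquarter
    _ = _ := by rw [← hμ]; ring
end

section
/- For every r > 2 there exists a constant C(r) > 0 such that for all u ∈ ℝ: |u+1|^r ≥ 1 + r·u + C(r)·|u|^r. -/
open Real

set_option maxHeartbeats 1000000 in
private lemma stmt4_aux (r C : ℝ) (hr : 2 < r) (hCdef : C = ((1:ℝ)/2) ^ r)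
    (u : ℝ) : 1 + r * u + C * |u| ^ r ≤ |u + 1| ^ r := by
  have hr0 : (0:ℝ) < r := by linarith
  have hr1 : (1:ℝ) ≤ r := by linarith
  have hC0 : 0 < C := hCdef ▸ rpow_pos_of_pos (by norm_num) r
  have hC1 : C ≤ 1 := hCdef ▸ rpow_le_one (by norm_num) (by norm_num) hr0.le
  rcases eq_or_ne u 0 with rfl | hu0
  · simp [Real.zero_rpow hr0.ne']
  rcases le_or_gt 0 u with hu | hu
  · -- u > 0
    have hupos : 0 < u := lt_of_le_of_ne hu (Ne.symm hu0)
    rw [abs_of_nonneg hu, abs_of_nonneg (by linarith : (0:ℝ) ≤ u + 1)]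
    have hcomm : (u + 1) ^ r = (1 + u) ^ r := by rw [add_comm]
    rcases le_or_gt u 1 with hu1 | hu1
    · -- 0 < u ≤ 1 : use (1+u)^r ≥ (1+(r/2)u)^2
      have hb : 1 + (r/2) * u ≤ (1 + u) ^ (r/2) := by
        have := one_add_mul_self_le_rpow_one_add (by linarith : (-1:ℝ) ≤ u)
          (by linarith : (1:ℝ) ≤ r/2)
        linarith [this]
      have hbn : (0:ℝ) ≤ 1 + (r/2) * u := by positivity
      have hsq : (1 + (r/2) * u)^2 ≤ ((1 + u) ^ (r/2))^2 := by
        apply pow_le_pow_left₀ hbn hb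
      have hrw : ((1 + u) ^ (r/2))^2 = (1 + u) ^ r := by
        rw [← rpow_natCast ((1+u) ^ (r/2)) 2, ← rpow_mul (by linarith)]
        norm_num
      have hur : u ^ r ≤ u ^ (2:ℝ) := by
        rcases eq_or_lt_of_le hu1 with h1 | h1
        · rw [h1]; simp
        · exact rpow_le_rpow_of_exponent_ge hupos hu1 (by linarith)
      have hu2 : u ^ (2:ℝ) = u^2 := by
        rw [← rpow_natCast u 2]; norm_num
      have hCu : C * u ^ r ≤ (r/2)^2 * u^2 := by
        have h1 : C * u ^ r ≤ 1 * u ^ (2:ℝ) := by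
          apply mul_le_mul hC1 hur (rpow_nonneg hu _) zero_le_one
        have h2 : (1:ℝ) ≤ (r/2)^2 := by nlinarith
        rw [hu2] at h1
        nlinarith [sq_nonneg u]
      nlinarith [hsq, hrw, hCu, hcomm]
    · -- u ≥ 1 : (1+u)^r ≥ u^r + r u^(r-1) + (r-1) u^(r-2)
      have hu1' : (1:ℝ) ≤ u := hu1.le
      have hiu : (0:ℝ) ≤ 1/u := by positivity
      have hb : 1 + (r-1) * (1/u) ≤ (1 + 1/u) ^ (r-1) :=
        one_add_mul_self_le_rpow_one_add (by linarith) (by linarith)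
      have hfact : (1 + u) ^ (r-1) = u ^ (r-1) * (1 + 1/u) ^ (r-1) := by
        rw [← mul_rpow hu (by positivity)]
        congr 1
        field_simp
        ring
      have hkey : u ^ (r-1) * (1 + (r-1) * (1/u)) ≤ (1 + u) ^ (r-1) := by
        rw [hfact]
        exact mul_le_mul_of_nonneg_left hb (rpow_nonneg hu _)
      have h2 : u ^ (r-2) * u = u ^ (r-1) := by
        rw [← rpow_add_one hu0 (r-2)]; ring_nf
      have hexp : u ^ (r-1) * (1 + (r-1) * (1/u)) = u ^ (r-1) + (r-1) * u ^ (r-2) := by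
        field_simp
        nlinarith [h2]
      have hmul : (1 + u) ^ (r-1) * (1 + u) = (1 + u) ^ r := by
        rw [← rpow_add_one (by positivity : (1:ℝ) + u ≠ 0) (r-1)]; ring_nf
      have hstep : (u ^ (r-1) + (r-1) * u ^ (r-2)) * (1 + u) ≤ (1 + u) ^ r := by
        rw [← hmul]
        apply mul_le_mul_of_nonneg_right _ (by linarith)
        rw [← hexp]; exact hkey
      have h1 : u ^ (r-1) * u = u ^ r := by
        rw [← rpow_add_one hu0 (r-1)]; ring_nf
      have hge1 : (1:ℝ) ≤ u ^ (r-2) := by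
        have := rpow_le_rpow_of_exponent_le hu1' (by linarith : (0:ℝ) ≤ r-2)
        simpa using this
      have hge2 : u ≤ u ^ (r-1) := by
        have := rpow_le_rpow_of_exponent_le hu1' (by linarith : (1:ℝ) ≤ r-1)
        simpa using this
      have hCu : C * u ^ r ≤ u ^ r := by
        nlinarith [rpow_nonneg hu r]
      nlinarith [hstep, rpow_nonneg hu r, hcomm]
  · -- u < 0
    obtain ⟨t, rfl⟩ : ∃ t, u = -t := ⟨-u, by ring⟩
    have ht0 : 0 < t := by linarith
    have habs : |(-t)| = t := by rw [abs_neg, abs_of_pos ht0]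
    rw [habs]
    rcases le_or_gt t 1 with ht1 | ht1
    · -- -1 ≤ u < 0
      have habs1 : |(-t) + 1| = 1 - t := by
        rw [abs_of_nonneg (by linarith)]; ring
      rw [habs1]
      rcases le_or_gt (r * t) 2 with hrt | hrt
      · -- r t ≤ 2
        have hb : 1 - (r/2) * t ≤ (1 - t) ^ (r/2) := by
          have := one_add_mul_self_le_rpow_one_add (by linarith : (-1:ℝ) ≤ -t)
            (by linarith : (1:ℝ) ≤ r/2)
          have h' : 1 + r/2 * (-t) ≤ (1 + (-t)) ^ (r/2) := this
          rw [show (1:ℝ) + (-t) = 1 - t by ring] at h'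
          linarith
        have hbn : (0:ℝ) ≤ 1 - (r/2) * t := by nlinarith
        have hsq : (1 - (r/2) * t)^2 ≤ ((1 - t) ^ (r/2))^2 :=
          pow_le_pow_left₀ hbn hb 2
        have hrw : ((1 - t) ^ (r/2))^2 = (1 - t) ^ r := by
          rw [← rpow_natCast ((1-t) ^ (r/2)) 2, ← rpow_mul (by linarith)]
          norm_num
        have htr : t ^ r ≤ t ^ (2:ℝ) := by
          rcases eq_or_lt_of_le ht1 with h1 | h1
          · rw [h1]; simp
          · exact rpow_le_rpow_of_exponent_ge ht0 ht1 (by linarith)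
        have ht2 : t ^ (2:ℝ) = t^2 := by
          rw [← rpow_natCast t 2]; norm_num
        have hCu : C * t ^ r ≤ (r/2)^2 * t^2 := by
          have h1 : C * t ^ r ≤ 1 * t ^ (2:ℝ) :=
            mul_le_mul hC1 htr (rpow_nonneg ht0.le _) zero_le_one
          have h2 : (1:ℝ) ≤ (r/2)^2 := by nlinarith
          rw [ht2] at h1
          nlinarith [sq_nonneg t]
        nlinarith [hsq, hrw, hCu]
      · -- r t > 2
        have htr : t ^ r ≤ 1 := rpow_le_one ht0.le ht1 hr0.le
        have hpos : (0:ℝ) ≤ (1 - t) ^ r := rpow_nonneg (by linarith) r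
        nlinarith [mul_le_mul hC1 htr (rpow_nonneg ht0.le r) zero_le_one]
    · -- u < -1
      have habs1 : |(-t) + 1| = t - 1 := by
        rw [abs_of_nonpos (by linarith)]; ring
      rw [habs1]
      rcases le_or_gt t 2 with ht2 | ht2
      · -- 1 < t ≤ 2
        have htr : t ^ r ≤ 2 ^ r := rpow_le_rpow ht0.le ht2 hr0.le
        have hCt : C * t ^ r ≤ 1 := by
          have h3 : C * t ^ r ≤ C * 2 ^ r :=
            mul_le_mul_of_nonneg_left htr hC0.le
          have h2 : C * 2 ^ r = 1 := by
            rw [hCdef, ← mul_rpow (by norm_num) (by norm_num)]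
            norm_num
          linarith
        have hpos : (0:ℝ) ≤ (t - 1) ^ r := rpow_nonneg (by linarith) r
        nlinarith
      · -- t > 2
        have hhalf : C * t ^ r = (t/2) ^ r := by
          rw [hCdef, ← mul_rpow (by norm_num) ht0.le]
          congr 1
          ring
        have hmono : (t/2) ^ r ≤ (t - 1) ^ r :=
          rpow_le_rpow (by linarith) (by linarith) hr0.le
        rw [hhalf]
        nlinarith

theorem stmt4 (r : ℝ) (hr : 2 < r) :
    ∃ C > (0:ℝ), ∀ u : ℝ, |u + 1| ^ r ≥ 1 + r * u + C * |u| ^ r := by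
  exact ⟨((1:ℝ)/2) ^ r, rpow_pos_of_pos (by norm_num) r,
    fun u => stmt4_aux r _ hr rfl u⟩
end

section
/- Let 2 < p < q and f(x) = a·x^p + b for x > 1, f(x) = c·x^q for 0 ≤ x ≤ 1, with a+b=c, ap=cq, c > 0. Then f is superadditive under square-root composition: for all s, t ≥ 0, f(√(s+t)) ≥ f(√s) + f(√t). -/
theorem stmt17 (p q a b c : ℝ) (hp : 2 < p) (hpq : p < q)
    (hc : 0 < c) (habc : a + b = c) (hapcq : a * p = c * q)
    (f : ℝ → ℝ)
    (hf₁ : ∀ x : ℝ, 1 < x → f x = a * x ^ p + b)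
    (hf₂ : ∀ x : ℝ, 0 ≤ x → x ≤ 1 → f x = c * x ^ q) :
    ∀ s t : ℝ, 0 ≤ s → 0 ≤ t →
      f (Real.sqrt (s + t)) ≥ f (Real.sqrt s) + f (Real.sqrt t) := by
  have hp0 : (0:ℝ) < p := by linarith
  have hq0 : (0:ℝ) < q := by linarith
  have ha : 0 < a := by nlinarith
  have hb : b < 0 := by nlinarith
  subst habc
  have e1 : ∀ z : ℝ, 0 ≤ z → z ≤ 1 → f (Real.sqrt z) = (a+b) * z ^ (q/2) := by
    intro z hz0 hz1
    rw [hf₂ _ (Real.sqrt_nonneg z) (Real.sqrt_le_one.mpr hz1)]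
    rw [Real.sqrt_eq_rpow, ← Real.rpow_mul hz0, show (1/2) * q = q/2 by ring]
  have e2 : ∀ z : ℝ, 1 < z → f (Real.sqrt z) = a * z ^ (p/2) + b := by
    intro z hz
    have hz0 : (0:ℝ) ≤ z := by linarith
    have h1 : 1 < Real.sqrt z := by
      rw [show (1:ℝ) = Real.sqrt 1 by simp]
      exact Real.sqrt_lt_sqrt (by norm_num) hz
    rw [hf₁ _ h1]
    rw [Real.sqrt_eq_rpow, ← Real.rpow_mul hz0, show (1/2) * p = p/2 by ring]
  have key : ∀ x y : ℝ, 0 < x → x ≤ y → f (Real.sqrt x) * y ≤ f (Real.sqrt y) * x := by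
    intro x y hx hxy
    have hy0 : 0 < y := lt_of_lt_of_le hx hxy
    rcases le_or_gt y 1 with hy1 | hy1
    · -- both ≤ 1
      have hx1 : x ≤ 1 := le_trans hxy hy1
      rw [e1 x hx.le hx1, e1 y hy0.le hy1]
      have hx2 : x ^ (q/2) = x ^ (q/2-1) * x := by
        rw [← Real.rpow_add_one hx.ne' (q/2-1), show q/2-1+1 = q/2 by ring]
      have hy2 : y ^ (q/2) = y ^ (q/2-1) * y := by
        rw [← Real.rpow_add_one hy0.ne' (q/2-1), show q/2-1+1 = q/2 by ring]
      have hmono : x ^ (q/2-1) ≤ y ^ (q/2-1) :=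
        Real.rpow_le_rpow hx.le hxy (by linarith)
      rw [hx2, hy2]
      nlinarith [mul_nonneg (mul_nonneg (by linarith : (0:ℝ) ≤ a + b)
        (mul_pos hx hy0).le) (sub_nonneg.2 hmono), Real.rpow_nonneg hx.le (q/2-1)]
    · rcases le_or_gt x 1 with hx1 | hx1
      · -- x ≤ 1 < y
        rw [e1 x hx.le hx1, e2 y hy1]
        have hxq : x ^ (q/2) ≤ x := by
          have := Real.rpow_le_rpow_of_exponent_ge hx hx1 (by linarith : (1:ℝ) ≤ q/2)
          rwa [Real.rpow_one] at this
        have hyp : y ≤ y ^ (p/2) := by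
          have := Real.rpow_le_rpow_of_exponent_le hy1.le (by linarith : (1:ℝ) ≤ p/2)
          rwa [Real.rpow_one] at this
        nlinarith [mul_nonneg (mul_pos ha hx).le (sub_nonneg.2 hyp),
          mul_nonneg (mul_nonneg (by linarith : (0:ℝ) ≤ a + b) hy0.le)
            (sub_nonneg.2 hxq),
          mul_nonpos_of_nonpos_of_nonneg hb.le
            (mul_nonneg hx.le (by linarith : (0:ℝ) ≤ y-1))]
      · -- 1 < x ≤ y
        rw [e2 x hx1, e2 y (lt_of_lt_of_le hx1 hxy)]
        have hx2 : x ^ (p/2) = x ^ (p/2-1) * x := by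
          rw [← Real.rpow_add_one hx.ne' (p/2-1), show p/2-1+1 = p/2 by ring]
        have hy2 : y ^ (p/2) = y ^ (p/2-1) * y := by
          rw [← Real.rpow_add_one hy0.ne' (p/2-1), show p/2-1+1 = p/2 by ring]
        have hmono : x ^ (p/2-1) ≤ y ^ (p/2-1) :=
          Real.rpow_le_rpow hx.le hxy (by linarith)
        rw [hx2, hy2]
        nlinarith [mul_nonneg (mul_nonneg ha.le (mul_pos hx hy0).le)
          (sub_nonneg.2 hmono),
          mul_nonpos_of_nonpos_of_nonneg hb.le (by linarith : (0:ℝ) ≤ y - x)]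
  have f0 : f 0 = 0 := by
    rw [hf₂ 0 le_rfl zero_le_one, Real.zero_rpow hq0.ne', mul_zero]
  intro s t hs ht
  rcases eq_or_lt_of_le hs with hs0 | hs0
  · subst hs0; simp [Real.sqrt_zero, f0]
  rcases eq_or_lt_of_le ht with ht0 | ht0
  · subst ht0; simp [Real.sqrt_zero, f0]
  have hst : 0 < s + t := by linarith
  have k1 := key s (s+t) hs0 (by linarith)
  have k2 := key t (t+s) ht0 (by linarith)
  rw [add_comm t s] at k2
  nlinarith [k1, k2, hst]
end
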